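/- Let the partial n×n matrix P (n ≥ 4) have all diagonal entries a, all entries at distance 1 from the diagonal equal to b, corner entries (1,n) and (n,1) equal to c, and all other entries unspecified. If P has a positive definite completion, then its unique maximum determinant completion is a Toeplitz matrix. -/

import Mathlib

/-!
At an unspecified position `(p, q)` a maximum determinant completion `A` is stationary along the
symmetric direction `E = E_pq + E_qp`, and by Jacobi's formula the derivative there is
`det A * tr (A⁻¹ E) = 2 det A * (A⁻¹)_pq`. Hence `B = A⁻¹` is tridiagonal apart from its two
corners, and every interior row of `B A = 1` is a three-term relation between consecutive rows
of `A`. Evaluating the relation for row `r + 1` at the columns `r` and `r + 2` shows that the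
off-diagonal of `B` is a constant `e` (this needs `A_{r,r+2} ≠ a`, which holds because
`A_{r,r+2}² < a²` by positive definiteness), and at column `r + 1` that its interior diagonal is
a constant `d`. So for fixed `j` the differences `D_r = A_{r+1,j+1} - A_{r,j}` satisfy
`e D_r + d D_{r+1} + e D_{r+2} = 0`; they vanish on the three central diagonals, hence
everywhere when `e ≠ 0`. When `e = 0` the interior rows of `A` are multiples of unit vectors and
the claim is immediate.
-/

open Matrix Filter Topology Polynomial

theorem Matrix.PosDef.eventually_posDef {n : Type*} [Fintype n] {A : Matrix n n ℝ}
    (hA : A.PosDef) : ∀ᶠ M in 𝓝 A, M.IsHermitian → M.PosDef := by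
  have hquad : Continuous fun p : Matrix n n ℝ × (n → ℝ) => p.2 ⬝ᵥ (p.1 *ᵥ p.2) := by
    fun_prop
  have hsphere : ∀ᶠ M in 𝓝 A, ∀ x ∈ Metric.sphere (0 : n → ℝ) 1, 0 < x ⬝ᵥ (M *ᵥ x) := by
    refine (isCompact_sphere 0 1).eventually_forall_of_forall_eventually fun x hx => ?_
    have hx0 : x ≠ 0 := by rintro rfl; simp at hx
    exact (hquad.tendsto (A, x)).eventually_const_lt
      (by simpa using hA.dotProduct_mulVec_pos hx0)
  filter_upwards [hsphere] with M hM hherm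
  refine .of_dotProduct_mulVec_pos hherm fun x hx => ?_
  have hnorm : 0 < ‖x‖ := norm_pos_iff.mpr hx
  have hunit := hM (‖x‖⁻¹ • x) (by simp [norm_smul, hnorm.ne'])
  simp only [mulVec_smul, dotProduct_smul, smul_dotProduct, smul_eq_mul] at hunit
  simpa using pos_of_mul_pos_right (pos_of_mul_pos_right hunit (by positivity)) (by positivity)

theorem Matrix.hasDerivAt_det_add_smul {n : Type*} [Fintype n] [DecidableEq n]
    {A : Matrix n n ℝ} (hA : IsUnit A.det) (E : Matrix n n ℝ) :
    HasDerivAt (fun t : ℝ => (A + t • E).det) (A.det * (A⁻¹ * E).trace) 0 := by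
  set q := (det (1 + (X : ℝ[X]) • (A⁻¹ * E).map C)).divX.divX
  have hfactor : (fun t : ℝ => (A + t • E).det)
      = fun t => A.det * (1 + (A⁻¹ * E).trace * t + q.eval t * t ^ 2) := by
    funext t
    rw [← det_one_add_smul, ← det_mul, mul_add, mul_one, mul_smul_comm,
      mul_nonsing_inv_cancel_left _ _ hA]
  rw [hfactor]
  simpa using ((((hasDerivAt_id (0 : ℝ)).const_mul (A⁻¹ * E).trace).const_add 1).add
    ((q.hasDerivAt 0).mul (hasDerivAt_pow 2 (0 : ℝ)))).const_mul A.det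

theorem Matrix.PosDef.trace_inv_mul_eq_zero_of_det_le {n : Type*} [Fintype n] [DecidableEq n]
    {A E : Matrix n n ℝ} (hA : A.PosDef) (hE : E.IsSymm)
    (hmax : ∀ t : ℝ, (A + t • E).PosDef → (A + t • E).det ≤ A.det) :
    (A⁻¹ * E).trace = 0 := by
  have hloc : IsLocalMax (fun t : ℝ => (A + t • E).det) 0 := by
    have hline : Tendsto (fun t : ℝ => A + t • E) (𝓝 0) (𝓝 A) := by
      have hcont : Continuous fun t : ℝ => A + t • E := by fun_prop
      simpa using hcont.tendsto 0
    filter_upwards [hline.eventually hA.eventually_posDef] with t ht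
    simpa using hmax t (ht (isHermitian_iff_isSymm.mpr
      ((isHermitian_iff_isSymm.mp hA.1).add (hE.smul t))))
  have hderiv := hloc.hasDerivAt_eq_zero (hasDerivAt_det_add_smul hA.det_pos.ne'.isUnit E)
  exact (mul_eq_zero.mp hderiv).resolve_left hA.det_pos.ne'

theorem Matrix.isSymm_single_add_single {n : Type*} [DecidableEq n] (p q : n) :
    (single p q (1 : ℝ) + single q p 1).IsSymm :=
  IsSymm.ext fun i j => by simp only [add_apply, single_apply]; grind

theorem Matrix.add_smul_single_add_single_apply_of_ne {n : Type*} [DecidableEq n]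
    (A : Matrix n n ℝ) (t : ℝ) {p q i j : n} (hpq : ¬(i = p ∧ j = q)) (hqp : ¬(i = q ∧ j = p)) :
    (A + t • (single p q 1 + single q p 1) : Matrix n n ℝ) i j = A i j := by
  simp only [add_apply, smul_apply, single_apply, smul_eq_mul]
  grind

theorem Matrix.PosDef.inv_apply_eq_zero_of_det_le {n : Type*} [Fintype n] [DecidableEq n]
    {A : Matrix n n ℝ} (hA : A.PosDef) {p q : n}
    (hmax : ∀ t : ℝ, (A + t • (single p q 1 + single q p 1)).PosDef →
      (A + t • (single p q 1 + single q p 1)).det ≤ A.det) :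
    A⁻¹ p q = 0 := by
  have htrace := hA.trace_inv_mul_eq_zero_of_det_le (isSymm_single_add_single p q) hmax
  have hsymm : A⁻¹ q p = A⁻¹ p q := hA.inv.1.apply p q
  simp only [mul_add, trace_add, trace_mul_single, hsymm, MulOpposite.op_one, one_smul] at htrace
  linarith

theorem Matrix.PosDef.apply_mul_apply_lt {n : Type*} [Fintype n] {A : Matrix n n ℝ}
    (hA : A.PosDef) {i j : n} (hij : i ≠ j) : A i j * A j i < A i i * A j j := by
  have h2 := (hA.submatrix (e := ![i, j]) (by
    intro x y; fin_cases x <;> fin_cases y <;> simp [hij, hij.symm])).det_pos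
  rw [det_fin_two] at h2
  simpa [sub_pos] using h2

theorem Matrix.PosDef.apply_ne_of_apply_self_eq {n : Type*} [Fintype n] {A : Matrix n n ℝ}
    {a : ℝ} (hA : A.PosDef) {i j : n} (hij : i ≠ j) (hi : A i i = a) (hj : A j j = a) :
    A i j ≠ a := by
  intro hija
  have hlt := hA.apply_mul_apply_lt hij
  have hsymm : A j i = A i j := by simpa using hA.1.apply i j
  rw [hsymm, hija, hi, hj] at hlt
  exact lt_irrefl _ hlt

section ThreeTermRecurrence

variable {N : ℕ} {A B : ℕ → ℕ → ℝ} {a b e d : ℝ}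

theorem subdiag_eq_superdiag_of_rows (hA : ∀ i j, A i j = A j i)
    (hdiag : ∀ i, i < N → A i i = a) (hsup : ∀ i, i + 1 < N → A i (i + 1) = b)
    (hgap : ∀ i, i + 2 < N → A i (i + 2) ≠ a)
    (hrow : ∀ r j, r + 2 < N → j < N →
      B (r + 1) r * A r j + B (r + 1) (r + 1) * A (r + 1) j + B (r + 1) (r + 2) * A (r + 2) j
        = if r + 1 = j then 1 else 0)
    {r : ℕ} (hr : r + 2 < N) : B (r + 1) r = B (r + 1) (r + 2) := by
  have hleft := hrow r r hr (by omega)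
  have hright := hrow r (r + 2) hr hr
  rw [hdiag r (by omega), hA (r + 1) r, hsup r (by omega), hA (r + 2) r, if_neg (by omega)]
    at hleft
  rw [hsup (r + 1) hr, hdiag (r + 2) hr, if_neg (by omega)] at hright
  have hprod : (B (r + 1) r - B (r + 1) (r + 2)) * (a - A r (r + 2)) = 0 := by
    linear_combination hleft - hright
  exact sub_eq_zero.mp ((mul_eq_zero.mp hprod).resolve_right (sub_ne_zero.mpr (hgap r hr).symm))

theorem superdiag_eq_of_rows (hA : ∀ i j, A i j = A j i) (hB : ∀ i j, B i j = B j i)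
    (hdiag : ∀ i, i < N → A i i = a) (hsup : ∀ i, i + 1 < N → A i (i + 1) = b)
    (hgap : ∀ i, i + 2 < N → A i (i + 2) ≠ a)
    (hrow : ∀ r j, r + 2 < N → j < N →
      B (r + 1) r * A r j + B (r + 1) (r + 1) * A (r + 1) j + B (r + 1) (r + 2) * A (r + 2) j
        = if r + 1 = j then 1 else 0) :
    ∀ r, r + 1 < N → B r (r + 1) = B 0 1 := by
  intro r hr
  induction r with
  | zero => rfl
  | succ r ih =>
    rw [← ih (by omega), hB r, subdiag_eq_superdiag_of_rows hA hdiag hsup hgap hrow hr]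

theorem diag_eq_of_rows (hA : ∀ i j, A i j = A j i) (hB : ∀ i j, B i j = B j i)
    (hdiag : ∀ i, i < N → A i i = a) (hsup : ∀ i, i + 1 < N → A i (i + 1) = b)
    (hgap : ∀ i, i + 2 < N → A i (i + 2) ≠ a)
    (hrow : ∀ r j, r + 2 < N → j < N →
      B (r + 1) r * A r j + B (r + 1) (r + 1) * A (r + 1) j + B (r + 1) (r + 2) * A (r + 2) j
        = if r + 1 = j then 1 else 0)
    {r : ℕ} (hr : r + 2 < N) : B (r + 1) (r + 1) * a = 1 - 2 * B 0 1 * b := by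
  have h := hrow r (r + 1) hr (by omega)
  rw [hA (r + 2) (r + 1), hB (r + 1) r, hsup r (by omega), hdiag (r + 1) (by omega),
    hsup (r + 1) hr,
    superdiag_eq_of_rows hA hB hdiag hsup hgap hrow r (by omega),
    superdiag_eq_of_rows hA hB hdiag hsup hgap hrow (r + 1) hr, if_pos rfl] at h
  linarith

theorem constant_coeff_recurrence_of_rows (hA : ∀ i j, A i j = A j i) (hB : ∀ i j, B i j = B j i)
    (hdiag : ∀ i, i < N → A i i = a) (hsup : ∀ i, i + 1 < N → A i (i + 1) = b)
    (hgap : ∀ i, i + 2 < N → A i (i + 2) ≠ a) (ha : a ≠ 0)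
    (hrow : ∀ r j, r + 2 < N → j < N →
      B (r + 1) r * A r j + B (r + 1) (r + 1) * A (r + 1) j + B (r + 1) (r + 2) * A (r + 2) j
        = if r + 1 = j then 1 else 0) :
    ∀ r j, r + 2 < N → j < N →
      B 0 1 * A r j + B 1 1 * A (r + 1) j + B 0 1 * A (r + 2) j = if r + 1 = j then 1 else 0 := by
  intro r j hr hj
  have hd : B (r + 1) (r + 1) = B 1 1 := mul_right_cancel₀ ha <| by
    rw [diag_eq_of_rows hA hB hdiag hsup hgap hrow hr,
      diag_eq_of_rows hA hB hdiag hsup hgap hrow (r := 0) (by omega)]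
  rw [← hrow r j hr hj, hB (r + 1) r, hd,
    superdiag_eq_of_rows hA hB hdiag hsup hgap hrow r (by omega),
    superdiag_eq_of_rows hA hB hdiag hsup hgap hrow (r + 1) hr]

theorem shift_difference_recurrence
    (hrec : ∀ r j, r + 2 < N → j < N →
      e * A r j + d * A (r + 1) j + e * A (r + 2) j = if r + 1 = j then 1 else 0)
    {r j : ℕ} (hr : r + 3 < N) (hj : j + 1 < N) :
    e * (A (r + 1) (j + 1) - A r j) + d * (A (r + 2) (j + 1) - A (r + 1) j)
      + e * (A (r + 3) (j + 1) - A (r + 2) j) = 0 := by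
  have hnext := hrec (r + 1) (j + 1) (by omega) hj
  have hcur := hrec r j (by omega) (by omega)
  have hδ : (if r + 1 + 1 = j + 1 then (1 : ℝ) else 0) = if r + 1 = j then 1 else 0 := by simp
  linear_combination hnext - hcur + hδ

theorem diagonal_shift_of_recurrence_of_ne_zero (he : e ≠ 0) (hA : ∀ i j, A i j = A j i)
    (hdiag : ∀ i, i < N → A i i = a) (hsup : ∀ i, i + 1 < N → A i (i + 1) = b)
    (hrec : ∀ r j, r + 2 < N → j < N →
      e * A r j + d * A (r + 1) j + e * A (r + 2) j = if r + 1 = j then 1 else 0) :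
    ∀ k j, j + k + 1 < N → A (j + k + 1) (j + 1) = A (j + k) j := by
  intro k
  induction k using Nat.twoStepInduction with
  | zero => intro j hj; rw [add_zero, hdiag _ hj, hdiag _ (by omega)]
  | one => intro j hj; rw [hA, hsup _ hj, hA, hsup _ (by omega)]
  | more k ih₀ ih₁ =>
    intro j hj
    have h₀ := ih₀ j (by omega)
    have h₁ : A (j + k + 2) (j + 1) = A (j + k + 1) j := ih₁ j (by omega)
    have hstep := shift_difference_recurrence hrec (r := j + k) (j := j) (by omega) (by omega)
    rw [h₀, h₁, sub_self, sub_self, mul_zero, mul_zero, zero_add, zero_add] at hstep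
    exact sub_eq_zero.mp ((mul_eq_zero.mp hstep).resolve_left he)

theorem diagonal_shift_of_recurrence_of_eq_zero (he : e = 0) (hA : ∀ i j, A i j = A j i)
    (hdiag : ∀ i, i < N → A i i = a)
    (hrec : ∀ r j, r + 2 < N → j < N →
      e * A r j + d * A (r + 1) j + e * A (r + 2) j = if r + 1 = j then 1 else 0) :
    ∀ k j, j + k + 1 < N → A (j + k + 1) (j + 1) = A (j + k) j := by
  have hvanish : ∀ r j, r + 2 < N → j < N → j ≠ r + 1 → A (r + 1) j = 0 := by
    intro r j hr hj hne
    have hoff := hrec r j hr hj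
    have hon := hrec r (r + 1) hr (by omega)
    rw [he, if_neg (Ne.symm hne)] at hoff
    rw [he, if_pos rfl] at hon
    have hd : d ≠ 0 := by rintro rfl; simp at hon
    simpa [hd] using hoff
  rintro (_ | k) j hj
  · rw [add_zero, hdiag _ hj, hdiag _ (by omega)]
  · show A (j + k + 2) (j + 1) = A (j + k + 1) j
    rw [hA, hvanish j (j + k + 2) (by omega) (by omega) (by omega),
      hvanish (j + k) j (by omega) (by omega) (by omega)]

theorem shift_invariant_of_recurrence (hA : ∀ i j, A i j = A j i)
    (hdiag : ∀ i, i < N → A i i = a) (hsup : ∀ i, i + 1 < N → A i (i + 1) = b)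
    (hrec : ∀ r j, r + 2 < N → j < N →
      e * A r j + d * A (r + 1) j + e * A (r + 2) j = if r + 1 = j then 1 else 0)
    {r j : ℕ} (hr : r + 1 < N) (hj : j + 1 < N) : A (r + 1) (j + 1) = A r j := by
  have hdiagonal : ∀ k j, j + k + 1 < N → A (j + k + 1) (j + 1) = A (j + k) j := by
    rcases eq_or_ne e 0 with he | he
    · exact diagonal_shift_of_recurrence_of_eq_zero he hA hdiag hrec
    · exact diagonal_shift_of_recurrence_of_ne_zero he hA hdiag hsup hrec
  rcases le_total j r with hjr | hrj
  · obtain ⟨k, rfl⟩ := Nat.exists_eq_add_of_le hjr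
    exact hdiagonal k j hr
  · obtain ⟨k, rfl⟩ := Nat.exists_eq_add_of_le hrj
    rw [hA, hA r]
    exact hdiagonal k r hj

theorem toeplitz_of_shift_invariant
    (hshift : ∀ r j, r + 1 < N → j + 1 < N → A (r + 1) (j + 1) = A r j)
    {i j i' j' : ℕ} (hi : i < N) (hj : j < N) (hi' : i' < N) (hj' : j' < N)
    (h : (i : ℤ) - j = i' - j') : A i j = A i' j' := by
  have hdiagonal : ∀ k i j, i + k < N → j + k < N → A (i + k) (j + k) = A i j := by
    intro k
    induction k with
    | zero => simp
    | succ k ih =>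
      intro i j hi hj
      rw [← ih i j (by omega) (by omega)]
      exact hshift _ _ (by omega) (by omega)
  rcases le_total i i' with hii' | hi'i
  · obtain ⟨k, rfl⟩ := Nat.exists_eq_add_of_le hii'
    obtain rfl : j' = j + k := by omega
    exact (hdiagonal k i j hi' hj').symm
  · obtain ⟨k, rfl⟩ := Nat.exists_eq_add_of_le hi'i
    obtain rfl : j = j' + k := by omega
    exact hdiagonal k i' j' hi hj

end ThreeTermRecurrence

section NatEntry

open Fin.NatCast

variable {N : ℕ} [NeZero N]

/-- The indices are read modulo `N`; only indices `< N` are ever used. -/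
def Matrix.natEntry {α : Type*} (M : Matrix (Fin N) (Fin N) α) (i j : ℕ) : α :=
  M i j

theorem Matrix.natEntry_rows_of_mul_eq_one {A B : Matrix (Fin N) (Fin N) ℝ}
    (hBA : B * A = 1) (hB : B.IsSymm)
    (hband : ∀ p q : Fin N, (p : ℕ) + 1 < q → ¬((p : ℕ) = 0 ∧ (q : ℕ) = N - 1) → B p q = 0)
    {r j : ℕ} (hr : r + 2 < N) (hj : j < N) :
    B.natEntry (r + 1) r * A.natEntry r j + B.natEntry (r + 1) (r + 1) * A.natEntry (r + 1) j
      + B.natEntry (r + 1) (r + 2) * A.natEntry (r + 2) j = if r + 1 = j then 1 else 0 := by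
  have hval : ∀ {k : ℕ}, k < N → ((k : Fin N) : ℕ) = k := Fin.val_cast_of_lt
  have hzero : ∀ k ∈ Finset.range N, k ∉ ({r, r + 1, r + 2} : Finset ℕ) →
      B.natEntry (r + 1) k * A.natEntry k j = 0 := by
    intro k hk hnot
    simp only [Finset.mem_range] at hk
    simp only [Finset.mem_insert, Finset.mem_singleton, not_or] at hnot
    rcases lt_or_gt_of_ne hnot.1 with hkr | hkr
    · rw [natEntry, ← hB.apply, hband _ _ (by rw [hval hk, hval (by omega)]; omega)
        (by rw [hval hk, hval (by omega)]; omega), zero_mul]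
    · rw [natEntry, hband _ _ (by rw [hval hk, hval (by omega)]; omega)
        (by rw [hval hk, hval (by omega)]; omega), zero_mul]
  have hentry := congrFun (congrFun hBA ((r + 1 : ℕ) : Fin N)) (j : Fin N)
  simp only [mul_apply, one_apply, Fin.ext_iff, hval (show r + 1 < N by omega), hval hj]
    at hentry
  calc _ = ∑ k ∈ {r, r + 1, r + 2}, B.natEntry (r + 1) k * A.natEntry k j := by
        rw [Finset.sum_insert (by simp), Finset.sum_insert (by simp), Finset.sum_singleton,
          add_assoc]
    _ = ∑ k ∈ Finset.range N, B.natEntry (r + 1) k * A.natEntry k j :=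
        Finset.sum_subset (by intro k; simp; omega) hzero
    _ = _ := by rw [← hentry, ← Fin.sum_univ_eq_sum_range]; simp [natEntry]

theorem Matrix.PosDef.natEntry_toeplitz_of_inv_band {A : Matrix (Fin N) (Fin N) ℝ} {a b : ℝ}
    (hA : A.PosDef) (hdiag : ∀ i, A i i = a)
    (hsup : ∀ i j : Fin N, (i : ℕ) + 1 = (j : ℕ) → A i j = b)
    (hband : ∀ p q : Fin N, (p : ℕ) + 1 < q → ¬((p : ℕ) = 0 ∧ (q : ℕ) = N - 1) → A⁻¹ p q = 0)
    {i j i' j' : ℕ} (hi : i < N) (hj : j < N) (hi' : i' < N) (hj' : j' < N)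
    (h : (i : ℤ) - j = i' - j') : A.natEntry i j = A.natEntry i' j' := by
  have hval : ∀ {k : ℕ}, k < N → ((k : Fin N) : ℕ) = k := Fin.val_cast_of_lt
  have hsymm : A.IsSymm := isHermitian_iff_isSymm.mp hA.1
  have hrec := constant_coeff_recurrence_of_rows (N := N) (A := A.natEntry) (B := A⁻¹.natEntry)
    (fun _ _ => hsymm.apply _ _) (fun _ _ => hsymm.inv.apply _ _) (fun _ _ => hdiag _)
    (fun _ hk => hsup _ _ (by rw [hval (by omega), hval hk]))
    (fun _ hk => hA.apply_ne_of_apply_self_eq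
      (Fin.ne_of_val_ne (by rw [hval (by omega), hval hk]; omega)) (hdiag _) (hdiag _))
    (hdiag 0 ▸ hA.diag_pos).ne'
    (fun _ _ hr hk => natEntry_rows_of_mul_eq_one (nonsing_inv_mul A hA.det_pos.ne'.isUnit)
      hsymm.inv hband hr hk)
  exact toeplitz_of_shift_invariant
    (fun _ _ hr hk => shift_invariant_of_recurrence (fun _ _ => hsymm.apply _ _)
      (fun _ _ => hdiag _) (fun _ hk => hsup _ _ (by rw [hval (by omega), hval hk])) hrec hr hk)
    hi hj hi' hj' h

end NatEntry

theorem stmt14 {n : ℕ} (hn : 4 ≤ n) (a b c : ℝ)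
    (Completion : Matrix (Fin n) (Fin n) ℝ → Prop)
    (hCompletion : ∀ M, Completion M ↔ (M.IsSymm ∧ (∀ i, M i i = a) ∧
      (∀ i j : Fin n, (i : ℕ) + 1 = (j : ℕ) → M i j = b) ∧
      M ⟨0, by omega⟩ ⟨n - 1, by omega⟩ = c))
    (A : Matrix (Fin n) (Fin n) ℝ) (hA : Completion A) (hApd : A.PosDef)
    (hAmax : ∀ M, Completion M → M.PosDef → M.det ≤ A.det) :
    ∀ i j i' j' : Fin n, (i : ℤ) - (j : ℤ) = (i' : ℤ) - (j' : ℤ) → A i j = A i' j' := by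
  obtain ⟨hsymm, hdiag, hsup, hcorner⟩ := (hCompletion A).1 hA
  have hband : ∀ p q : Fin n, (p : ℕ) + 1 < q → ¬((p : ℕ) = 0 ∧ (q : ℕ) = n - 1) →
      A⁻¹ p q = 0 := by
    intro p q hpq hpq_corner
    refine hApd.inv_apply_eq_zero_of_det_le fun t ht => hAmax _ ?_ ht
    have hkeep : ∀ i j : Fin n, ((i : ℕ) ≠ p ∨ (j : ℕ) ≠ q) → ((i : ℕ) ≠ q ∨ (j : ℕ) ≠ p) →
        (A + t • (single p q 1 + single q p 1) : Matrix (Fin n) (Fin n) ℝ) i j = A i j :=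
      fun i j h₁ h₂ => add_smul_single_add_single_apply_of_ne A t
        (by simp only [Fin.ext_iff]; omega) (by simp only [Fin.ext_iff]; omega)
    refine (hCompletion _).2 ⟨hsymm.add ((isSymm_single_add_single p q).smul t), fun i => ?_,
      fun i j hij => ?_, ?_⟩
    · rw [hkeep i i (by omega) (by omega), hdiag]
    · rw [hkeep i j (by omega) (by omega), hsup i j hij]
    · rw [hkeep _ _ (by simp only; omega) (by simp only; omega), hcorner]
  intro i j i' j' h
  have := i.neZero
  simpa [natEntry] using
    hApd.natEntry_toeplitz_of_inv_band hdiag hsup hband i.isLt j.isLt i'.isLt j'.isLt h
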